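/- Let ρ₀ be a representation of a finitely generated group Γ into the isometry group of a δ-hyperbolic geodesic space X whose orbit map sends a given family L of geodesics of the Cayley graph C_S(Γ) to (K₀,C₀)-quasi-geodesics. Then there exist K ≥ 1, C ≥ 0 and M ≥ 0, depending only on δ, K₀, C₀, such that any representation ρ whose orbit map is within distance C₀ of that of ρ₀ on the ball of radius M around the identity sends every geodesic of L to a (K,C)-quasi-geodesic. In particular the set of conjugacy classes of A-stable representations is open. -/

import Mathlib

/-!
For `|m - n| ≤ M` the orbit distances `d(ρ(l m)x, ρ(l n)x) = d(x, ρ((l m)⁻¹ l n)x)` of `ρ` and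
`ρ₀` differ by at most `2C₀`, because `(l m)⁻¹ l n` lies in the ball of radius `|m - n|`. So the
orbit of `ρ` along `l` is a `(K₀, 2C₀)`-quasi-geodesic on every window of length `M`, and it
remains to show that in a `δ`-hyperbolic geodesic space such a local quasi-geodesic is a global
one once `M` is large in terms of `δ, K₀, C₀`.

This rests on the Morse lemma: a geodesic between the ends of a finite `(K, C)`-quasi-geodesic
stays within a bounded distance of it. If a point of the geodesic is at maximal distance `R` from
the quasi-geodesic, there is a detour of length `O(R)` around it that avoids the ball of radius
`R`; by the divergence of geodesics the point lies within `4δ log₂(length) + O(1)` of the detour,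
so `R = O(δ √R) + O(1)` is bounded. Hence the middle point of a window of length `M = 2N` has
bounded Gromov product with the ends of the window, and sampling the orbit every `N` steps gives
a chain whose steps are long compared with these Gromov products; by the four-point condition
such a chain moves away from its start linearly.
-/

open Set Metric

section

variable {X : Type*} [MetricSpace X]

-- `gromovProduct w x y` is the Gromov product `(x | y)_w`
noncomputable def gromovProduct (w x y : X) : ℝ := (dist x w + dist y w - dist x y) / 2

lemma gromovProduct_comm (w x y : X) : gromovProduct w x y = gromovProduct w y x := by
  unfold gromovProduct; rw [dist_comm x y]; ring

lemma gromovProduct_le_add_dist (w p x y : X) :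
    gromovProduct w x y ≤ gromovProduct p x y + dist w p := by
  unfold gromovProduct
  linarith [dist_triangle x p w, dist_triangle y p w, dist_comm p w]

def IsGromovHyperbolic (δ : ℝ) (X : Type*) [MetricSpace X] : Prop :=
  ∀ w x y z : X, min (gromovProduct w x y) (gromovProduct w y z) - δ ≤ gromovProduct w x z

variable {δ : ℝ}

lemma IsGromovHyperbolic.four_point (hX : IsGromovHyperbolic δ X) (P Q R S : X) :
    dist P R + dist Q S ≤ max (dist P Q + dist R S) (dist P S + dist Q R) + 2 * δ := by
  have h := hX S P Q R
  unfold gromovProduct at h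
  rcases min_le_iff.mp (sub_le_iff_le_add.mp h) with h' | h'
  · exact le_add_of_le_add_right (by linarith) (le_max_left _ _)
  · exact le_add_of_le_add_right (by linarith) (le_max_right _ _)

def IsGeodesicSegment (f : ℝ → X) (x y : X) : Prop :=
  f 0 = x ∧ f (dist x y) = y ∧
    ∀ s ∈ Icc (0 : ℝ) (dist x y), ∀ t ∈ Icc (0 : ℝ) (dist x y), dist (f s) (f t) = |s - t|

def IsGeodesicSpace (X : Type*) [MetricSpace X] : Prop :=
  ∀ x y : X, ∃ f : ℝ → X, IsGeodesicSegment f x y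

namespace IsGeodesicSegment

variable {f : ℝ → X} {x y : X} {t : ℝ}

lemma dist_left (hf : IsGeodesicSegment f x y) (ht : t ∈ Icc 0 (dist x y)) :
    dist x (f t) = t := by
  rw [← hf.1, hf.2.2 0 ⟨le_rfl, dist_nonneg⟩ t ht, zero_sub, abs_neg, abs_of_nonneg ht.1]

lemma dist_right (hf : IsGeodesicSegment f x y) (ht : t ∈ Icc 0 (dist x y)) :
    dist y (f t) = dist x y - t := by
  conv_lhs => rw [← hf.2.1]
  rw [hf.2.2 _ ⟨dist_nonneg, le_rfl⟩ t ht, abs_of_nonneg (sub_nonneg.mpr ht.2)]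

lemma gromovProduct_eq_zero (hf : IsGeodesicSegment f x y) (ht : t ∈ Icc 0 (dist x y)) :
    gromovProduct (f t) x y = 0 := by
  unfold gromovProduct
  rw [dist_left hf ht, dist_right hf ht]
  ring

lemma continuousOn (hf : IsGeodesicSegment f x y) : ContinuousOn f (Icc 0 (dist x y)) :=
  (LipschitzOnWith.mk_one fun s hs t ht => (hf.2.2 s hs t ht).le).continuousOn

lemma comp_add (hf : IsGeodesicSegment f x y) {a b : ℝ} (ha : 0 ≤ a) (hab : a ≤ b)
    (hb : b ≤ dist x y) : IsGeodesicSegment (fun s => f (a + s)) (f a) (f b) := by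
  have hmem : ∀ s ∈ Icc 0 (b - a), a + s ∈ Icc 0 (dist x y) :=
    fun s hs => ⟨by linarith [hs.1], by linarith [hs.2]⟩
  have hdist : dist (f a) (f b) = b - a := by
    rw [hf.2.2 a ⟨ha, hab.trans hb⟩ b ⟨ha.trans hab, hb⟩, abs_sub_comm,
      abs_of_nonneg (sub_nonneg.mpr hab)]
  refine ⟨by simp, by simp [hdist], fun s hs t ht => ?_⟩
  rw [hdist] at hs ht
  rw [hf.2.2 _ (hmem s hs) _ (hmem t ht), add_sub_add_left_eq_sub]

end IsGeodesicSegment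

lemma IsGromovHyperbolic.min_gromovProduct_le (hX : IsGromovHyperbolic δ X) {f : ℝ → X}
    {x y : X} (hf : IsGeodesicSegment f x y) {t : ℝ} (ht : t ∈ Icc 0 (dist x y)) (z : X) :
    min (gromovProduct (f t) x z) (gromovProduct (f t) y z) ≤ δ := by
  have h := hX (f t) x z y
  rw [hf.gromovProduct_eq_zero ht, gromovProduct_comm (f t) z y] at h
  linarith

lemma IsGromovHyperbolic.exists_dist_le_of_gromovProduct_le (hX : IsGromovHyperbolic δ X)
    (hδ : 0 ≤ δ) {f : ℝ → X} {x z : X} (hf : IsGeodesicSegment f x z) {p : X}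
    (hp : gromovProduct p x z ≤ δ) : ∃ t ∈ Icc 0 (dist x z), dist p (f t) ≤ 4 * δ := by
  unfold gromovProduct at hp
  rcases le_total (dist x p) (dist x z) with hxp | hxz
  · have ht : dist x p ∈ Icc 0 (dist x z) := ⟨dist_nonneg, hxp⟩
    refine ⟨dist x p, ht, ?_⟩
    have h := hX.min_gromovProduct_le hf ht p
    unfold gromovProduct at h
    rw [hf.dist_left ht, hf.dist_right ht] at h
    rcases min_le_iff.mp h with h | h <;> linarith [dist_comm p z]
  · refine ⟨dist x z, ⟨dist_nonneg, le_rfl⟩, ?_⟩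
    rw [hf.2.1]
    linarith [dist_comm p x, dist_comm p z]

/-! ### Coarse paths and the divergence of geodesics -/

def IsCoarsePath (D : ℝ) (m : ℕ) (z : ℕ → X) : Prop := ∀ i < m, dist (z i) (z (i + 1)) ≤ D

namespace IsCoarsePath

variable {D : ℝ} {m : ℕ} {z : ℕ → X}

lemma mono (hz : IsCoarsePath D m z) {D' : ℝ} (h : D ≤ D') : IsCoarsePath D' m z :=
  fun i hi => (hz i hi).trans h

lemma shift (hz : IsCoarsePath D m z) {a k : ℕ} (h : a + k ≤ m) :
    IsCoarsePath D k (fun i => z (a + i)) :=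
  fun i hi => hz (a + i) (by omega)

lemma reverse (hz : IsCoarsePath D m z) : IsCoarsePath D m (fun i => z (m - i)) := by
  intro i hi
  have h := hz (m - i - 1) (by omega)
  rwa [show m - i - 1 + 1 = m - i by omega, dist_comm, ← show m - (i + 1) = m - i - 1 by omega]
    at h

lemma dist_le (hz : IsCoarsePath D m z) : dist (z 0) (z m) ≤ D * m := by
  induction m with
  | zero => simp
  | succ m ih =>
    have h₁ := ih fun i hi => hz i (by omega)
    have h₂ := hz m (by omega)
    push_cast
    linarith [dist_triangle (z 0) (z m) (z (m + 1))]

lemma append {m' : ℕ} {z' : ℕ → X} (hz : IsCoarsePath D m z) (hz' : IsCoarsePath D m' z')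
    (h : z m = z' 0) :
    ∃ w : ℕ → X, w 0 = z 0 ∧ w (m + m') = z' m' ∧ IsCoarsePath D (m + m') w ∧
      w '' Iic (m + m') ⊆ z '' Iic m ∪ z' '' Iic m' := by
  refine ⟨fun j => if j ≤ m then z j else z' (j - m), by simp, ?_, ?_, ?_⟩
  · rcases Nat.eq_zero_or_pos m' with rfl | hm'
    · simpa using h
    · simp [show ¬ m + m' ≤ m by omega]
  · intro i hi
    by_cases him : i + 1 ≤ m
    · simpa [him, show i ≤ m by omega] using hz i him
    by_cases him' : i = m
    · subst him'
      simpa [h] using hz' 0 (by omega)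
    · simpa [show ¬ i ≤ m by omega, him, show i + 1 - m = i - m + 1 by omega]
        using hz' (i - m) (by omega)
  · rintro _ ⟨j, hj, rfl⟩
    by_cases hjm : j ≤ m
    · exact Or.inl ⟨j, hjm, by simp [hjm]⟩
    · exact Or.inr ⟨j - m, by simp only [mem_Iic] at hj ⊢; omega, by simp [hjm]⟩

lemma exists_subpath {n : ℕ} {y : ℕ → X} (hy : IsCoarsePath D n y) {a b : ℕ} (ha : a ≤ n)
    (hb : b ≤ n) :
    ∃ (w : ℕ → X) (e : ℕ), (e : ℝ) = |(a : ℝ) - b| ∧ w 0 = y a ∧ w e = y b ∧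
      IsCoarsePath D e w ∧ w '' Iic e ⊆ y '' Iic n := by
  rcases le_total a b with hab | hba
  · refine ⟨fun i => y (a + i), b - a, ?_, rfl, by simp [hab], hy.shift (by omega), ?_⟩
    · rw [Nat.cast_sub hab, abs_sub_comm, abs_of_nonneg (by simp [hab])]
    · rintro _ ⟨i, hi, rfl⟩
      exact ⟨a + i, by simp only [mem_Iic] at hi ⊢; omega, rfl⟩
  · refine ⟨fun i => y (b + (a - b - i)), a - b, ?_, by simp [hba], by simp,
      (hy.shift (a := b) (k := a - b) (by omega)).reverse, ?_⟩
    · rw [Nat.cast_sub hba, abs_of_nonneg (by simp [hba])]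
    · rintro _ ⟨i, hi, rfl⟩
      exact ⟨b + (a - b - i), by simp only [mem_Iic] at hi ⊢; omega, rfl⟩

end IsCoarsePath

lemma IsGeodesicSegment.exists_coarsePath {f : ℝ → X} {x y : X} (hf : IsGeodesicSegment f x y)
    {m : ℕ} (hm : dist x y ≤ m) :
    ∃ σ : ℕ → X, σ 0 = x ∧ σ m = y ∧ IsCoarsePath 1 m σ ∧
      σ '' Iic m ⊆ f '' Icc 0 (dist x y) := by
  have hmem (j : ℕ) : min (j : ℝ) (dist x y) ∈ Icc 0 (dist x y) :=
    ⟨le_min j.cast_nonneg dist_nonneg, min_le_right _ _⟩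
  refine ⟨fun j => f (min (j : ℝ) (dist x y)), by simpa using hf.1, by simpa [hm] using hf.2.1,
    fun i _ => ?_, ?_⟩
  · rw [hf.2.2 _ (hmem i) _ (hmem (i + 1))]
    refine (abs_min_sub_min_le_max _ _ _ _).trans ?_
    simp
  · rintro _ ⟨j, -, rfl⟩
    exact ⟨_, hmem j, rfl⟩

lemma IsGromovHyperbolic.exists_dist_le_of_isCoarsePath (hX : IsGromovHyperbolic δ X)
    (hδ : 0 ≤ δ) (hgeo : IsGeodesicSpace X) {D : ℝ} (hD : 0 ≤ D) (k : ℕ) {m : ℕ}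
    (hm : m ≤ 2 ^ k) {z : ℕ → X} (hz : IsCoarsePath D m z) {f : ℝ → X}
    (hf : IsGeodesicSegment f (z 0) (z m)) {t : ℝ} (ht : t ∈ Icc 0 (dist (z 0) (z m))) :
    ∃ i ≤ m, dist (f t) (z i) ≤ 4 * δ * k + D := by
  induction k generalizing m z f t with
  | zero =>
    refine ⟨0, Nat.zero_le _, ?_⟩
    rw [dist_comm, hf.dist_left ht]
    have : (m : ℝ) ≤ 1 := by exact_mod_cast hm
    nlinarith [ht.2, hz.dist_le]
  | succ k ih =>
    -- thinness at the middle point `z (m / 2)` puts `f t` within `4δ` of a geodesic spanning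
    -- one of the two halves, to which the induction hypothesis applies
    have half {a b : ℕ} (hab : a ≤ b) (hbm : b ≤ m) (hk : b - a ≤ 2 ^ k)
        (hp : gromovProduct (f t) (z a) (z b) ≤ δ) :
        ∃ i ≤ m, dist (f t) (z i) ≤ 4 * δ * (k + 1 : ℕ) + D := by
      obtain ⟨g, hg⟩ := hgeo (z (a + 0)) (z (a + (b - a)))
      rw [show a + (b - a) = b by omega] at hg
      obtain ⟨s, hs, hps⟩ := hX.exists_dist_le_of_gromovProduct_le hδ hg hp
      obtain ⟨i, hi, hgi⟩ := ih hk (hz.shift (a := a) (by omega))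
        (by rwa [show a + (b - a) = b by omega]) (by rwa [show a + (b - a) = b by omega])
      refine ⟨a + i, by omega, ?_⟩
      push_cast
      linarith [dist_triangle (f t) (g s) (z (a + i))]
    have hthin := hX.min_gromovProduct_le hf ht (z (m / 2))
    rcases min_le_iff.mp hthin with h | h
    · exact half (Nat.zero_le _) (Nat.div_le_self m 2) (by rw [pow_succ] at hm; omega) h
    · rw [gromovProduct_comm] at h
      exact half (Nat.div_le_self m 2) le_rfl (by rw [pow_succ] at hm; omega) h

/-! ### The Morse lemma -/

lemma IsGeodesicSegment.image_subset_closedBall {f : ℝ → X} {x y : X}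
    (hf : IsGeodesicSegment f x y) :
    f '' Icc 0 (dist x y) ⊆ closedBall x (dist x y) ∩ closedBall y (dist x y) := by
  rintro _ ⟨t, ht, rfl⟩
  simp only [mem_inter_iff, mem_closedBall, dist_comm (f t), hf.dist_left ht, hf.dist_right ht]
  exact ⟨ht.2, by linarith [ht.1]⟩

lemma exists_closedBall_subset_of_far {p q : X} {R : ℝ} {F : Set X} (hF : F.Finite)
    (hR : 0 ≤ R) (hfar : ∀ v ∈ F, R ≤ dist p v)
    (hq : q ∈ F ∨ (2 * R ≤ dist p q ∧ F.Nonempty ∧ infDist q F ≤ R)) :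
    ∃ v ∈ F, dist q v ≤ R ∧ closedBall q (dist q v) ⊆ {u | R ≤ dist p u} := by
  rcases hq with hqF | ⟨hpq, hne, hqF⟩
  · refine ⟨q, hqF, by simpa using hR, fun u hu => ?_⟩
    rw [mem_closedBall, dist_self, dist_le_zero] at hu
    exact hu ▸ hfar q hqF
  · obtain ⟨v, hvF, hv⟩ := hF.isCompact.exists_infDist_eq_dist hne q
    refine ⟨v, hvF, hv ▸ hqF, fun u hu => ?_⟩
    rw [mem_closedBall, ← hv] at hu
    show R ≤ dist p u
    linarith [dist_triangle p u q, dist_comm u q]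

lemma IsGeodesicSegment.exists_closedBall_subset_of_isMaxOn {f : ℝ → X} {x y : X} {F : Set X}
    (hf : IsGeodesicSegment f x y) (hF : F.Finite) (hx : x ∈ F) (hy : y ∈ F) {ts s : ℝ}
    (hts : ts ∈ Icc 0 (dist x y)) (hs : s ∈ Icc 0 (dist x y))
    (hmax : IsMaxOn (fun t => infDist (f t) F) (Icc 0 (dist x y)) ts)
    (hend : s = 0 ∨ s = dist x y ∨ |ts - s| = 2 * infDist (f ts) F) :
    ∃ v ∈ F, dist (f s) v ≤ infDist (f ts) F ∧
      closedBall (f s) (dist (f s) v) ⊆ {u | infDist (f ts) F ≤ dist (f ts) u} := by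
  refine exists_closedBall_subset_of_far hF infDist_nonneg
    (fun v hv => infDist_le_dist_of_mem hv) ?_
  rcases hend with rfl | rfl | h
  · exact Or.inl (by rwa [hf.1])
  · exact Or.inl (by rwa [hf.2.1])
  · exact Or.inr ⟨by rw [hf.2.2 ts hts s hs, h], ⟨x, hx⟩, hmax hs⟩

def IsQuasiGeodesicUpTo (K C : ℝ) (n : ℕ) (y : ℕ → X) : Prop :=
  ∀ i ≤ n, ∀ j ≤ n, |(i : ℝ) - j| / K - C ≤ dist (y i) (y j) ∧
    dist (y i) (y j) ≤ K * |(i : ℝ) - j| + C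

namespace IsQuasiGeodesicUpTo

variable {K C : ℝ} {n : ℕ} {y : ℕ → X}

lemma isCoarsePath (hy : IsQuasiGeodesicUpTo K C n y) : IsCoarsePath (K + C) n y := by
  intro i hi
  simpa using (hy i hi.le (i + 1) hi).2

lemma le_dist_zero (hy : IsQuasiGeodesicUpTo K C n y) {i : ℕ} (hi : i ≤ n) :
    i / K - C ≤ dist (y 0) (y i) := by
  simpa using (hy 0 (Nat.zero_le n) i hi).1

lemma dist_zero_le (hy : IsQuasiGeodesicUpTo K C n y) {i : ℕ} (hi : i ≤ n) :
    dist (y 0) (y i) ≤ K * i + C := by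
  simpa using (hy 0 (Nat.zero_le n) i hi).2

lemma abs_sub_le (hy : IsQuasiGeodesicUpTo K C n y) (hK : 0 < K) {i j : ℕ} (hi : i ≤ n)
    (hj : j ≤ n) : |(i : ℝ) - j| ≤ K * (dist (y i) (y j) + C) := by
  have h := (hy i hi j hj).1
  rw [div_sub' hK.ne', div_le_iff₀ hK] at h
  linarith

lemma exists_coarsePath_of_closedBall_subset (hy : IsQuasiGeodesicUpTo K C n y)
    (hgeo : IsGeodesicSpace X) (hK : 1 ≤ K) (hC : 0 ≤ C) {S : Set X} (hyS : y '' Iic n ⊆ S)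
    {q₁ q₂ : X} {i₁ i₂ : ℕ} (hi₁ : i₁ ≤ n) (hi₂ : i₂ ≤ n) {R : ℝ}
    (h₁ : dist q₁ (y i₁) ≤ R) (h₂ : dist q₂ (y i₂) ≤ R) (hq : dist q₁ q₂ ≤ 4 * R)
    (hS₁ : closedBall q₁ (dist q₁ (y i₁)) ⊆ S) (hS₂ : closedBall q₂ (dist q₂ (y i₂)) ⊆ S) :
    ∃ (m : ℕ) (σ : ℕ → X), σ 0 = q₁ ∧ σ m = q₂ ∧ IsCoarsePath (K + C) m σ ∧
      σ '' Iic m ⊆ S ∧ (m : ℝ) ≤ 8 * K * (R + C + 1) := by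
  have hR : 0 ≤ R := dist_nonneg.trans h₁
  have hm₁ : R ≤ ⌈R⌉₊ := Nat.le_ceil R
  have hm₁' : (⌈R⌉₊ : ℝ) ≤ R + 1 := (Nat.ceil_lt_add_one hR).le
  obtain ⟨g₁, hg₁⟩ := hgeo q₁ (y i₁)
  obtain ⟨σ₁, hσ₁0, hσ₁m, hσ₁, hσ₁S⟩ := hg₁.exists_coarsePath (h₁.trans hm₁)
  obtain ⟨g₂, hg₂⟩ := hgeo (y i₂) q₂
  obtain ⟨σ₂, hσ₂0, hσ₂m, hσ₂, hσ₂S⟩ :=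
    hg₂.exists_coarsePath ((dist_comm (y i₂) q₂).trans_le h₂ |>.trans hm₁)
  obtain ⟨w, e, he, hw0, hwe, hw, hwS⟩ := hy.isCoarsePath.exists_subpath hi₁ hi₂
  have hKC : 1 ≤ K + C := by linarith
  obtain ⟨τ, hτ0, hτm, hτ, hτS⟩ := (hσ₁.mono hKC).append hw (hσ₁m.trans hw0.symm)
  obtain ⟨σ, hσ0, hσm, hσ, hσS⟩ := hτ.append (hσ₂.mono hKC) (hτm.trans (hwe.trans hσ₂0.symm))
  refine ⟨_, σ, hσ0.trans (hτ0.trans hσ₁0), hσm.trans hσ₂m, hσ, ?_, ?_⟩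
  · refine hσS.trans (union_subset (hτS.trans (union_subset ?_ (hwS.trans hyS))) ?_)
    · exact hσ₁S.trans (hg₁.image_subset_closedBall.trans (inter_subset_left.trans hS₁))
    · rw [dist_comm] at hS₂
      exact hσ₂S.trans (hg₂.image_subset_closedBall.trans (inter_subset_right.trans hS₂))
  · have he' : (e : ℝ) ≤ K * (6 * R + C) := by
      rw [he]
      refine (hy.abs_sub_le (by linarith) hi₁ hi₂).trans
        (mul_le_mul_of_nonneg_left ?_ (by linarith))
      linarith [dist_triangle4 (y i₁) q₁ q₂ (y i₂), dist_comm (y i₁) q₁]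
    push_cast
    nlinarith

end IsQuasiGeodesicUpTo

lemma sq_le_four_mul_two_pow (j : ℕ) : j ^ 2 ≤ 4 * 2 ^ j := by
  induction j with
  | zero => norm_num
  | succ j ih =>
    rcases le_or_gt j 2 with h | h
    · interval_cases j <;> norm_num
    · rw [pow_succ 2]; nlinarith

lemma exists_le_two_pow_sq_le (m : ℕ) : ∃ k : ℕ, m ≤ 2 ^ k ∧ k ^ 2 ≤ 8 * m := by
  refine ⟨Nat.clog 2 m, Nat.le_pow_clog one_lt_two m, ?_⟩
  rcases Nat.lt_or_ge m 2 with hm | hm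
  · simp [Nat.clog_of_right_le_one (by omega : m ≤ 1)]
  · have hlt : 2 ^ (Nat.clog 2 m - 1) < m := Nat.pow_pred_clog_lt_self one_lt_two hm
    have h2 : 2 ^ Nat.clog 2 m = 2 * 2 ^ (Nat.clog 2 m - 1) := by
      rw [← pow_succ', Nat.sub_add_cancel (Nat.clog_pos one_lt_two hm)]
    linarith [sq_le_four_mul_two_pow (Nat.clog 2 m)]

lemma le_add_add_one_of_sq_le {u β e : ℝ} (hβ : 0 ≤ β) (he : 0 ≤ e) (h : u ^ 2 ≤ β * u + e) :
    u ≤ β + e + 1 := by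
  nlinarith

noncomputable def morseBound (δ K C : ℝ) : ℝ := 1024 * δ ^ 2 * K * (K + 2 * C + 2) + K + C + 1

lemma le_morseBound {δ K C R : ℝ} {k m : ℕ} (hK : 1 ≤ K) (hC : 0 ≤ C)
    (hR : R ≤ 4 * δ * k + (K + C)) (hk : k ^ 2 ≤ 8 * m) (hm : (m : ℝ) ≤ 8 * K * (R + C + 1)) :
    R ≤ morseBound δ K C := by
  have hδK : 0 ≤ 1024 * δ ^ 2 * K := by positivity
  rcases le_or_gt R (K + C) with hRKC | hRKC
  · unfold morseBound
    nlinarith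
  have hk' : ((k : ℝ)) ^ 2 ≤ 8 * m := by exact_mod_cast hk
  have hsq : (R - (K + C)) ^ 2 ≤
      1024 * δ ^ 2 * K * (R - (K + C)) + 1024 * δ ^ 2 * K * (K + 2 * C + 1) := by
    have h4 : (R - (K + C)) ^ 2 ≤ (4 * δ * k) ^ 2 := pow_le_pow_left₀ (by linarith) (by linarith) 2
    nlinarith
  have := le_add_add_one_of_sq_le hδK (by positivity) hsq
  unfold morseBound
  linarith

variable {K C : ℝ} {n : ℕ} {y : ℕ → X} {f : ℝ → X}

lemma morseBound_nonneg (hK : 1 ≤ K) (hC : 0 ≤ C) : 0 ≤ morseBound δ K C := by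
  unfold morseBound
  have : 0 ≤ 1024 * δ ^ 2 * K * (K + 2 * C + 2) := by positivity
  linarith


lemma IsQuasiGeodesicUpTo.exists_detour_of_isMaxOn (hy : IsQuasiGeodesicUpTo K C n y)
    (hgeo : IsGeodesicSpace X) (hK : 1 ≤ K) (hC : 0 ≤ C) (hf : IsGeodesicSegment f (y 0) (y n))
    {ts : ℝ} (hts : ts ∈ Icc 0 (dist (y 0) (y n)))
    (hmax : IsMaxOn (fun t => infDist (f t) (y '' Iic n)) (Icc 0 (dist (y 0) (y n))) ts) :
    ∃ (m : ℕ) (σ : ℕ → X) (g : ℝ → X) (t : ℝ), IsCoarsePath (K + C) m σ ∧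
      σ '' Iic m ⊆ {u | infDist (f ts) (y '' Iic n) ≤ dist (f ts) u} ∧
      (m : ℝ) ≤ 8 * K * (infDist (f ts) (y '' Iic n) + C + 1) ∧
      IsGeodesicSegment g (σ 0) (σ m) ∧ t ∈ Icc 0 (dist (σ 0) (σ m)) ∧ g t = f ts := by
  set L := dist (y 0) (y n)
  set F := y '' Iic n
  set R := infDist (f ts) F
  set S := {u | R ≤ dist (f ts) u}
  have hR : 0 ≤ R := infDist_nonneg
  have entry {s : ℝ} (hs : s ∈ Icc 0 L) (hend : s = 0 ∨ s = L ∨ |ts - s| = 2 * R) :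
      ∃ i ≤ n, dist (f s) (y i) ≤ R ∧ closedBall (f s) (dist (f s) (y i)) ⊆ S := by
    obtain ⟨_, ⟨i, hi, rfl⟩, hiR, hiS⟩ := hf.exists_closedBall_subset_of_isMaxOn
      ((finite_Iic n).image y) ⟨0, Nat.zero_le n, rfl⟩ ⟨n, mem_Iic.mpr le_rfl, rfl⟩ hts hs hmax hend
    exact ⟨i, hi, hiR, hiS⟩
  -- the detour leaves the geodesic at distance `2R` before and after `ts` (or at its ends), and
  -- follows the quasi-geodesic in between
  set a := max 0 (ts - 2 * R)
  set b := min L (ts + 2 * R)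
  have ha₀ : 0 ≤ a := le_max_left _ _
  have hats : a ≤ ts := max_le hts.1 (by linarith)
  have htsb : ts ≤ b := le_min hts.2 (by linarith)
  have hbL : b ≤ L := min_le_left _ _
  have hba : b - a ≤ 4 * R := by
    linarith [le_max_right 0 (ts - 2 * R), min_le_right L (ts + 2 * R)]
  have ha : a ∈ Icc 0 L := ⟨ha₀, hats.trans hts.2⟩
  have hb : b ∈ Icc 0 L := ⟨ha₀.trans (hats.trans htsb), hbL⟩
  have h2R : |2 * R| = 2 * R := abs_of_nonneg (by positivity)
  obtain ⟨i₁, hi₁, h₁, hS₁⟩ := entry ha (by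
    rcases max_choice 0 (ts - 2 * R) with h | h
    · exact Or.inl h
    · exact Or.inr (Or.inr (by simp only [a, h, sub_sub_cancel, h2R])))
  obtain ⟨i₂, hi₂, h₂, hS₂⟩ := entry hb (by
    rcases min_choice L (ts + 2 * R) with h | h
    · exact Or.inr (Or.inl h)
    · exact Or.inr (Or.inr (by simp only [b, h, sub_add_cancel_left, abs_neg, h2R])))
  have hab : dist (f a) (f b) = b - a := by
    rw [hf.2.2 a ha b hb, abs_sub_comm, abs_of_nonneg (by linarith)]
  obtain ⟨m, σ, hσ0, hσm, hσ, hσS, hm⟩ := hy.exists_coarsePath_of_closedBall_subset hgeo hK hC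
    (fun v hv => infDist_le_dist_of_mem hv) hi₁ hi₂ h₁ h₂ (hab.trans_le hba) hS₁ hS₂
  refine ⟨m, σ, fun s => f (a + s), ts - a, hσ, hσS, hm, ?_, ?_, by simp⟩
  · rw [hσ0, hσm]
    exact hf.comp_add ha₀ (hats.trans htsb) hbL
  · rw [hσ0, hσm, hab]
    constructor <;> linarith

lemma IsGromovHyperbolic.infDist_le_morseBound_of_isMaxOn (hX : IsGromovHyperbolic δ X)
    (hδ : 0 ≤ δ) (hgeo : IsGeodesicSpace X) (hK : 1 ≤ K) (hC : 0 ≤ C)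
    (hy : IsQuasiGeodesicUpTo K C n y) (hf : IsGeodesicSegment f (y 0) (y n)) {ts : ℝ}
    (hts : ts ∈ Icc 0 (dist (y 0) (y n)))
    (hmax : IsMaxOn (fun t => infDist (f t) (y '' Iic n)) (Icc 0 (dist (y 0) (y n))) ts) :
    infDist (f ts) (y '' Iic n) ≤ morseBound δ K C := by
  obtain ⟨m, σ, g, t, hσ, hσS, hm, hg, ht, hgt⟩ :=
    hy.exists_detour_of_isMaxOn hgeo hK hC hf hts hmax
  obtain ⟨k, hmk, hk⟩ := exists_le_two_pow_sq_le m
  obtain ⟨j, hj, hdj⟩ := hX.exists_dist_le_of_isCoarsePath hδ hgeo (by linarith) k hmk hσ hg ht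
  rw [hgt] at hdj
  exact le_morseBound hK hC ((hσS ⟨j, mem_Iic.mpr hj, rfl⟩).trans hdj) hk hm

theorem IsGromovHyperbolic.exists_dist_le_morseBound (hX : IsGromovHyperbolic δ X) (hδ : 0 ≤ δ)
    (hgeo : IsGeodesicSpace X) (hK : 1 ≤ K) (hC : 0 ≤ C) (hy : IsQuasiGeodesicUpTo K C n y)
    (hf : IsGeodesicSegment f (y 0) (y n)) {t : ℝ} (ht : t ∈ Icc 0 (dist (y 0) (y n))) :
    ∃ i ≤ n, dist (f t) (y i) ≤ morseBound δ K C := by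
  have hF : IsCompact (y '' Iic n) := ((finite_Iic n).image y).isCompact
  have hFne : (y '' Iic n).Nonempty := ⟨y 0, 0, Nat.zero_le n, rfl⟩
  obtain ⟨ts, hts, hmax⟩ := isCompact_Icc.exists_isMaxOn (nonempty_Icc.mpr dist_nonneg)
    ((continuous_infDist_pt _).comp_continuousOn hf.continuousOn)
  obtain ⟨_, ⟨i, hi, rfl⟩, hd⟩ := hF.exists_infDist_eq_dist hFne (f t)
  exact ⟨i, hi, hd ▸ (hmax ht).trans
    (hX.infDist_le_morseBound_of_isMaxOn hδ hgeo hK hC hy hf hts hmax)⟩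

/-! ### Local quasi-geodesics are global -/

lemma exists_le_and_le_add_of_forall_succ_le_add {I : ℕ → ℕ} {N m : ℕ} {J : ℝ} (hJ : 0 ≤ J)
    (h0 : I 0 ≤ N) (hm : N ≤ I m) (hstep : ∀ j < m, (I (j + 1) : ℝ) ≤ I j + J) :
    ∃ j ≤ m, N ≤ I j ∧ (I j : ℝ) ≤ N + J := by
  classical
  have hex : ∃ j, N ≤ I j := ⟨m, hm⟩
  obtain ⟨j, hj, hmin⟩ : ∃ j, N ≤ I j ∧ ∀ i < j, I i < N :=
    ⟨Nat.find hex, Nat.find_spec hex, fun i hi => not_le.mp (Nat.find_min hex hi)⟩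
  have hjm : j ≤ m := not_lt.mp fun h => (hmin m h).not_ge hm
  refine ⟨j, hjm, hj, ?_⟩
  cases j with
  | zero => rw [le_antisymm h0 hj]; linarith
  | succ j =>
    have : (I j : ℝ) < N := by exact_mod_cast hmin j j.lt_succ_self
    linarith [hstep j hjm]

noncomputable def midpointBound (δ K C : ℝ) : ℝ :=
  K * (K * (2 * morseBound δ K C + 1 + C)) + C + morseBound δ K C

lemma IsGromovHyperbolic.exists_indices_dist_le_morseBound (hX : IsGromovHyperbolic δ X)
    (hδ : 0 ≤ δ) (hgeo : IsGeodesicSpace X) (hK : 1 ≤ K) (hC : 0 ≤ C)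
    (hy : IsQuasiGeodesicUpTo K C n y) (hf : IsGeodesicSegment f (y 0) (y n)) {m : ℕ}
    (hm : 1 ≤ m) {σ : ℕ → X} (hσ0 : σ 0 = y 0) (hσm : σ m = y n)
    (hσf : σ '' Iic m ⊆ f '' Icc 0 (dist (y 0) (y n))) :
    ∃ I : ℕ → ℕ, I 0 = 0 ∧ I m = n ∧
      ∀ j ≤ m, I j ≤ n ∧ dist (σ j) (y (I j)) ≤ morseBound δ K C := by
  have hR₀ := morseBound_nonneg (δ := δ) hK hC
  have hnear (j : ℕ) : ∃ i, j ≤ m → i ≤ n ∧ dist (σ j) (y i) ≤ morseBound δ K C ∧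
      (j = 0 → i = 0) ∧ (j = m → i = n) := by
    by_cases h0 : j = 0
    · exact ⟨0, fun _ => ⟨Nat.zero_le _, by simpa [h0, hσ0] using hR₀, fun _ => rfl,
        fun h => by omega⟩⟩
    by_cases hjm : j = m
    · exact ⟨n, fun _ => ⟨le_rfl, by simpa [hjm, hσm] using hR₀, fun h => absurd h h0,
        fun _ => rfl⟩⟩
    by_cases hj : j ≤ m
    · obtain ⟨s, hs, hsj⟩ := hσf ⟨j, mem_Iic.mpr hj, rfl⟩
      obtain ⟨i, hi, hd⟩ := hX.exists_dist_le_morseBound hδ hgeo hK hC hy hf hs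
      exact ⟨i, fun _ => ⟨hi, hsj ▸ hd, fun h => absurd h h0, fun h => absurd h hjm⟩⟩
    · exact ⟨0, fun h => absurd h hj⟩
  choose I hI using hnear
  exact ⟨I, (hI 0 (Nat.zero_le _)).2.2.1 rfl, (hI m le_rfl).2.2.2 rfl,
    fun j hj => ⟨(hI j hj).1, (hI j hj).2.1⟩⟩

theorem IsGromovHyperbolic.gromovProduct_le_midpointBound (hX : IsGromovHyperbolic δ X)
    (hδ : 0 ≤ δ) (hgeo : IsGeodesicSpace X) (hK : 1 ≤ K) (hC : 0 ≤ C) {N : ℕ}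
    (hy : IsQuasiGeodesicUpTo K C (2 * N) y) (hL : 1 ≤ dist (y 0) (y (2 * N))) :
    gromovProduct (y N) (y 0) (y (2 * N)) ≤ midpointBound δ K C := by
  set R₀ := morseBound δ K C
  obtain ⟨f, hf⟩ := hgeo (y 0) (y (2 * N))
  obtain ⟨σ, hσ0, hσm, hσ, hσf⟩ := hf.exists_coarsePath (Nat.le_ceil _)
  set m := ⌈dist (y 0) (y (2 * N))⌉₊
  obtain ⟨I, hI0, hIm, hI⟩ := hX.exists_indices_dist_le_morseBound hδ hgeo hK hC hy hf
    (Nat.one_le_ceil_iff.mpr (by linarith)) hσ0 hσm hσf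
  -- the indices `I j` of points near the geodesic cross `N` in steps of at most `J`
  set J := K * (2 * R₀ + 1 + C)
  have hstep (j : ℕ) (hj : j < m) : (I (j + 1) : ℝ) ≤ I j + J := by
    obtain ⟨hi₁, hd₁⟩ := hI j hj.le
    obtain ⟨hi₂, hd₂⟩ := hI (j + 1) hj
    have hd : dist (y (I j)) (y (I (j + 1))) ≤ 2 * R₀ + 1 := by
      linarith [dist_triangle4 (y (I j)) (σ j) (σ (j + 1)) (y (I (j + 1))), hσ j hj,
        dist_comm (y (I j)) (σ j)]
    have : |(I j : ℝ) - I (j + 1)| ≤ J :=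
      (hy.abs_sub_le (by linarith) hi₁ hi₂).trans
        (mul_le_mul_of_nonneg_left (by linarith) (by linarith))
    linarith [neg_abs_le ((I j : ℝ) - I (j + 1))]
  obtain ⟨j, hjm, hNj, hjN⟩ := exists_le_and_le_add_of_forall_succ_le_add
    (mul_nonneg (by linarith) (by linarith [morseBound_nonneg (δ := δ) hK hC]))
    (hI0.trans_le (Nat.zero_le N)) (hIm ▸ Nat.le_mul_of_pos_left N two_pos) hstep
  obtain ⟨hij, hdj⟩ := hI j hjm
  obtain ⟨s, hs, hsj⟩ := hσf ⟨j, mem_Iic.mpr hjm, rfl⟩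
  have hN : dist (y N) (y (I j)) ≤ K * J + C := by
    refine (hy N (by omega) (I j) hij).2.trans ?_
    rw [abs_sub_comm, abs_of_nonneg (by simp [hNj])]
    gcongr
    linarith
  calc gromovProduct (y N) (y 0) (y (2 * N))
      ≤ gromovProduct (σ j) (y 0) (y (2 * N)) + dist (y N) (σ j) :=
        gromovProduct_le_add_dist _ _ _ _
    _ ≤ 0 + (K * J + C + R₀) := by
        rw [← hsj, hf.gromovProduct_eq_zero hs, hsj]
        linarith [dist_triangle (y N) (y (I j)) (σ j), dist_comm (y (I j)) (σ j)]
    _ = midpointBound δ K C := by simp [midpointBound, J, R₀]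

lemma IsGromovHyperbolic.le_dist_of_gromovProduct_le (hX : IsGromovHyperbolic δ X) (hδ : 0 ≤ δ)
    {c : ℝ} (hc : 0 ≤ c) {z : ℕ → X} (hstep : ∀ i, 2 * c + 2 * δ + 1 ≤ dist (z i) (z (i + 1)))
    (hprod : ∀ i, gromovProduct (z (i + 1)) (z i) (z (i + 2)) ≤ c) (k : ℕ) :
    (k : ℝ) ≤ dist (z 0) (z k) := by
  have key (k : ℕ) :
      dist (z 0) (z k) + dist (z k) (z (k + 1)) - (2 * c + 2 * δ) ≤ dist (z 0) (z (k + 1)) := by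
    induction k with
    | zero => simp; linarith
    | succ k ih =>
      have hfour := hX.four_point (z 0) (z k) (z (k + 1)) (z (k + 2))
      have hp := hprod k
      unfold gromovProduct at hp
      rcases max_cases (dist (z 0) (z k) + dist (z (k + 1)) (z (k + 2)))
        (dist (z 0) (z (k + 2)) + dist (z k) (z (k + 1))) with ⟨h, -⟩ | ⟨h, -⟩ <;>
      · rw [h] at hfour
        linarith [hstep k, dist_comm (z (k + 2)) (z (k + 1)), dist_comm (z k) (z (k + 1))]
  induction k with
  | zero => simp
  | succ k ih =>
    push_cast
    linarith [key k, hstep k]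

lemma midpointBound_nonneg (hK : 1 ≤ K) (hC : 0 ≤ C) : 0 ≤ midpointBound δ K C := by
  have := morseBound_nonneg (δ := δ) hK hC
  unfold midpointBound
  have : 0 ≤ K * (K * (2 * morseBound δ K C + 1 + C)) := by positivity
  linarith

noncomputable def localScale (δ K C : ℝ) : ℕ :=
  ⌈K * (2 * midpointBound δ K C + 2 * δ + 1 + C)⌉₊

lemma le_localScale (hδ : 0 ≤ δ) (hK : 1 ≤ K) (hC : 0 ≤ C) :
    K * (2 * midpointBound δ K C + 2 * δ + 1 + C) ≤ localScale δ K C ∧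
      K + C ≤ localScale δ K C ∧ 1 ≤ localScale δ K C := by
  have h := Nat.le_ceil (K * (2 * midpointBound δ K C + 2 * δ + 1 + C))
  have hM := midpointBound_nonneg (δ := δ) hK hC
  have hKC : K + C ≤ K * (2 * midpointBound δ K C + 2 * δ + 1 + C) := by nlinarith
  exact ⟨h, hKC.trans h, by exact_mod_cast (by linarith : (1 : ℝ) ≤ _).trans (hKC.trans h)⟩

lemma IsGromovHyperbolic.le_dist_and_gromovProduct_le_of_window (hX : IsGromovHyperbolic δ X)
    (hδ : 0 ≤ δ) (hgeo : IsGeodesicSpace X) (hK : 1 ≤ K) (hC : 0 ≤ C)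
    (hy : IsQuasiGeodesicUpTo K C (2 * localScale δ K C) y) :
    2 * midpointBound δ K C + 2 * δ + 1 ≤ dist (y 0) (y (localScale δ K C)) ∧
      gromovProduct (y (localScale δ K C)) (y 0) (y (2 * localScale δ K C)) ≤
        midpointBound δ K C := by
  set N := localScale δ K C
  obtain ⟨hN, -, -⟩ := le_localScale hδ hK hC
  have hNK : 2 * midpointBound δ K C + 2 * δ + 1 + C ≤ N / K := by
    rw [le_div_iff₀ (by linarith)]; linarith
  have hc := midpointBound_nonneg (δ := δ) hK hC
  have h2N := hy.le_dist_zero le_rfl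
  push_cast at h2N
  rw [mul_div_assoc] at h2N
  refine ⟨by linarith [hy.le_dist_zero (by omega : N ≤ 2 * N)], ?_⟩
  exact hX.gromovProduct_le_midpointBound hδ hgeo hK hC hy (by nlinarith)

theorem IsGromovHyperbolic.le_dist_of_forall_isQuasiGeodesicUpTo (hX : IsGromovHyperbolic δ X)
    (hδ : 0 ≤ δ) (hgeo : IsGeodesicSpace X) (hK : 1 ≤ K) (hC : 0 ≤ C)
    (hloc : ∀ b, IsQuasiGeodesicUpTo K C (2 * localScale δ K C) (fun i => y (b + i))) (n : ℕ) :
    (n : ℝ) / localScale δ K C - (K * localScale δ K C + C + 1) ≤ dist (y 0) (y n) := by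
  set N := localScale δ K C
  obtain ⟨-, -, hN₁⟩ := le_localScale hδ hK hC
  have hwindow (b : ℕ) := hX.le_dist_and_gromovProduct_le_of_window hδ hgeo hK hC (hloc b)
  have hprogress := hX.le_dist_of_gromovProduct_le hδ (midpointBound_nonneg hK hC)
    (z := fun i => y (i * N)) (fun i => by simpa [add_one_mul] using (hwindow (i * N)).1)
    (fun i => by simpa [add_mul, two_mul, add_assoc] using (hwindow (i * N)).2) (n / N)
  have hr : n % N < N := Nat.mod_lt n (by omega)
  have hrem : dist (y (n / N * N)) (y n) ≤ K * N + C := by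
    have := (hloc (n / N * N)).dist_zero_le (by omega : n % N ≤ 2 * N)
    simp only [add_zero, Nat.div_add_mod'] at this
    refine this.trans ?_
    gcongr
  have hq : (n : ℝ) / N ≤ (n / N : ℕ) + 1 := by
    rw [div_le_iff₀ (by exact_mod_cast hN₁)]
    have h : (N : ℝ) * (n / N : ℕ) + (n % N : ℕ) = n := by exact_mod_cast Nat.div_add_mod n N
    have : ((n % N : ℕ) : ℝ) < N := by exact_mod_cast hr
    linarith
  simp only [zero_mul] at hprogress
  linarith [dist_triangle (y 0) (y n) (y (n / N * N)), dist_comm (y n) (y (n / N * N))]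

theorem IsGromovHyperbolic.quasiGeodesic_of_local (hX : IsGromovHyperbolic δ X) (hδ : 0 ≤ δ)
    (hgeo : IsGeodesicSpace X) (hK : 1 ≤ K) (hC : 0 ≤ C) {w : ℤ → X}
    (hloc : ∀ m n : ℤ, |(m : ℝ) - n| ≤ 2 * localScale δ K C →
      |(m : ℝ) - n| / K - C ≤ dist (w m) (w n) ∧ dist (w m) (w n) ≤ K * |(m : ℝ) - n| + C)
    (m n : ℤ) :
    |(m : ℝ) - n| / localScale δ K C - (K * localScale δ K C + C + 1) ≤ dist (w m) (w n) ∧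
      dist (w m) (w n) ≤ localScale δ K C * |(m : ℝ) - n| + (K * localScale δ K C + C + 1) := by
  wlog hmn : m ≤ n generalizing m n
  · rw [dist_comm, abs_sub_comm]
    exact this n m (le_of_not_ge hmn)
  obtain ⟨k, rfl⟩ := Int.exists_add_of_le hmn
  set N := localScale δ K C
  have hcast (i j : ℕ) : ((m + i : ℤ) : ℝ) - (m + j : ℤ) = (i : ℝ) - j := by push_cast; ring
  have hy (b : ℕ) : IsQuasiGeodesicUpTo K C (2 * N) (fun i => w (m + (b + i : ℕ))) := by
    intro i hi j hj
    have hi' : (i : ℝ) ≤ 2 * N := by exact_mod_cast hi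
    have hj' : (j : ℝ) ≤ 2 * N := by exact_mod_cast hj
    have hij : |(i : ℝ) - j| ≤ 2 * N := abs_sub_le_iff.mpr
      ⟨by linarith [j.cast_nonneg (α := ℝ)], by linarith [i.cast_nonneg (α := ℝ)]⟩
    have := hloc (m + (b + i : ℕ)) (m + (b + j : ℕ)) (by rw [hcast]; push_cast; simpa using hij)
    rwa [hcast, show ((b + i : ℕ) : ℝ) - (b + j : ℕ) = (i : ℝ) - j by push_cast; ring] at this
  have habs : |(m : ℝ) - (m + k : ℤ)| = k := by
    rw [abs_sub_comm, show ((m + k : ℤ) : ℝ) - m = k by push_cast; ring, Nat.abs_cast]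
  obtain ⟨-, hKC, hN₁⟩ := le_localScale hδ hK hC
  rw [habs]
  constructor
  · simpa using
      hX.le_dist_of_forall_isQuasiGeodesicUpTo (y := fun t => w (m + t)) hδ hgeo hK hC hy k
  · have hpath : IsCoarsePath (K + C) k (fun i => w (m + i)) := fun i _ => by
      simpa using ((hy i).isCoarsePath) 0 (by omega)
    have := hpath.dist_le
    simp only [Nat.cast_zero, add_zero] at this
    have : (0 : ℝ) ≤ K * N + C + 1 := by positivity
    nlinarith [(Nat.cast_nonneg k : (0 : ℝ) ≤ k)]

end

section Orbit

variable {Γ X : Type*} [Group Γ] [MetricSpace X]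

lemma dist_orbit_eq (ψ : Γ →* (X ≃ᵢ X)) (x : X) (g h : Γ) :
    dist (ψ g x) (ψ h x) = dist x (ψ (g⁻¹ * h) x) := by
  conv_lhs => rw [← mul_inv_cancel_left g h, map_mul, IsometryEquiv.mul_apply]
  exact (ψ g).dist_eq x _

lemma abs_dist_orbit_sub_dist_orbit_le (ρ ρ₀ : Γ →* (X ≃ᵢ X)) (x : X) (g h : Γ) :
    |dist (ρ g x) (ρ h x) - dist (ρ₀ g x) (ρ₀ h x)| ≤ dist (ρ (g⁻¹ * h) x) (ρ₀ (g⁻¹ * h) x) := by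
  rw [dist_orbit_eq, dist_orbit_eq, dist_comm x, dist_comm x]
  exact abs_dist_sub_le _ _ _

end Orbit

theorem a_stable_open_general {Γ : Type*} [Group Γ] [MetricSpace Γ]
    (hinvΓ : ∀ g x y : Γ, dist (g * x) (g * y) = dist x y)
    {X : Type*} [MetricSpace X]
    (δ : ℝ) (hδ : 0 ≤ δ)
    (hhypX : ∀ w x y z : X,
      min ((dist x w + dist y w - dist x y) / 2) ((dist y w + dist z w - dist y z) / 2) - δ ≤
        (dist x w + dist z w - dist x z) / 2)
    (hgeoX : ∀ x y : X, ∃ f : ℝ → X, f 0 = x ∧ f (dist x y) = y ∧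
      ∀ s ∈ Set.Icc (0 : ℝ) (dist x y), ∀ t ∈ Set.Icc (0 : ℝ) (dist x y),
        dist (f s) (f t) = |s - t|) :
    ∀ K₀ C₀ : ℝ, 1 ≤ K₀ → 0 ≤ C₀ →
      ∃ K C M : ℝ, 1 ≤ K ∧ 0 ≤ C ∧ 0 ≤ M ∧
        ∀ (ρ₀ ρ : Γ →* (X ≃ᵢ X)) (x : X) (L : Set (ℤ → Γ)),
          (∀ l ∈ L, ∀ m n : ℤ, dist (l m) (l n) = |(m : ℝ) - n|) →
          (∀ l ∈ L, ∀ m n : ℤ,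
            |(m : ℝ) - n| / K₀ - C₀ ≤ dist (ρ₀ (l m) x) (ρ₀ (l n) x) ∧
              dist (ρ₀ (l m) x) (ρ₀ (l n) x) ≤ K₀ * |(m : ℝ) - n| + C₀) →
          (∀ γ : Γ, dist (1 : Γ) γ ≤ M → dist (ρ γ x) (ρ₀ γ x) ≤ C₀) →
          ∀ l ∈ L, ∀ m n : ℤ,
            |(m : ℝ) - n| / K - C ≤ dist (ρ (l m) x) (ρ (l n) x) ∧
              dist (ρ (l m) x) (ρ (l n) x) ≤ K * |(m : ℝ) - n| + C := by
  intro K₀ C₀ hK₀ hC₀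
  have hC₁ : 0 ≤ 2 * C₀ := by linarith
  set N := localScale δ K₀ (2 * C₀)
  obtain ⟨-, -, hN⟩ := le_localScale hδ hK₀ hC₁
  refine ⟨N, K₀ * N + 2 * C₀ + 1, 2 * N, by exact_mod_cast hN, by positivity, by positivity, ?_⟩
  intro ρ₀ ρ x L hL hρ₀ hclose l hl
  refine IsGromovHyperbolic.quasiGeodesic_of_local hhypX hδ hgeoX hK₀ hC₁ fun m n hmn => ?_
  have hγ : dist 1 ((l m)⁻¹ * l n) = |(m : ℝ) - n| := by
    rw [← hinvΓ (l m), mul_one, mul_inv_cancel_left, hL l hl]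
  have hρ := abs_le.mp ((abs_dist_orbit_sub_dist_orbit_le ρ ρ₀ x (l m) (l n)).trans
    (hclose _ (hγ ▸ hmn)))
  have := hρ₀ l hl m n
  constructor <;> linarith

/-- Openness of `A`-stability: if the orbit map of `ρ₀` sends a
family `L` of geodesics of the Cayley graph of `Γ` to `(K₀,C₀)`-quasi-geodesics of a
`δ`-hyperbolic geodesic space `X`, then there exist `K ≥ 1`, `C ≥ 0`, `M ≥ 0`
depending only on `δ`, `K₀`, `C₀` such that every representation `ρ` whose orbit map
is within distance `C₀` of that of `ρ₀` on the ball of radius `M` around the identity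
also sends every geodesic of `L` to a `(K,C)`-quasi-geodesic. -/
theorem a_stable_open {Γ : Type*} [Group Γ] [MetricSpace Γ]
    (hinvΓ : ∀ g x y : Γ, dist (g * x) (g * y) = dist x y)
    {X : Type*} [MetricSpace X] [ProperSpace X]
    (δ : ℝ) (hδ : 0 ≤ δ)
    (hhypX : ∀ w x y z : X,
      min ((dist x w + dist y w - dist x y) / 2) ((dist y w + dist z w - dist y z) / 2) - δ ≤
        (dist x w + dist z w - dist x z) / 2)
    (hgeoX : ∀ x y : X, ∃ f : ℝ → X, f 0 = x ∧ f (dist x y) = y ∧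
      ∀ s ∈ Set.Icc (0 : ℝ) (dist x y), ∀ t ∈ Set.Icc (0 : ℝ) (dist x y),
        dist (f s) (f t) = |s - t|) :
    ∀ K₀ C₀ : ℝ, 1 ≤ K₀ → 0 ≤ C₀ →
      ∃ K C M : ℝ, 1 ≤ K ∧ 0 ≤ C ∧ 0 ≤ M ∧
        ∀ (ρ₀ ρ : Γ →* (X ≃ᵢ X)) (x : X) (L : Set (ℤ → Γ)),
          (∀ l ∈ L, ∀ m n : ℤ, dist (l m) (l n) = |(m : ℝ) - n|) →
          (∀ l ∈ L, ∀ m n : ℤ,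
            |(m : ℝ) - n| / K₀ - C₀ ≤ dist (ρ₀ (l m) x) (ρ₀ (l n) x) ∧
              dist (ρ₀ (l m) x) (ρ₀ (l n) x) ≤ K₀ * |(m : ℝ) - n| + C₀) →
          (∀ γ : Γ, dist (1 : Γ) γ ≤ M → dist (ρ γ x) (ρ₀ γ x) ≤ C₀) →
          ∀ l ∈ L, ∀ m n : ℤ,
            |(m : ℝ) - n| / K - C ≤ dist (ρ (l m) x) (ρ (l n) x) ∧
              dist (ρ (l m) x) (ρ (l n) x) ≤ K * |(m : ℝ) - n| + C :=
  a_stable_open_general hinvΓ δ hδ hhypX hgeoX
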